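/- Let G be the weighted multigraph with two vertices joined by three parallel edges of positive lengths ℓ_1, ℓ_2, ℓ_3, polarized by q ≡ 0 (the unique irreducible cubic polarized graph of genus 2). Then (1/12)·(ℓ_1 + ℓ_2 + ℓ_3) − φ(G) ≤ (5/12)·σ_3/σ_2, where σ_i denotes the i-th elementary symmetric polynomial in ℓ_1, ℓ_2, ℓ_3. -/

import Mathlib

open scoped Classical
open Matrix Filter Topology

/-- A weighted multigraph with vertex type `V` and edge index type `E`:
each edge is assigned an (ordered representative of an unordered) pair of endpoints. -/
structure WMG (V E : Type) where
  ends : E → V × V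

namespace WMG

variable {V E : Type} [Fintype V] [DecidableEq V] [Fintype E] [DecidableEq E]

/-- `a` and `b` are joined by some edge belonging to `S`. -/
def Step (G : WMG V E) (S : Set E) (a b : V) : Prop :=
  ∃ k ∈ S, G.ends k = (a, b) ∨ G.ends k = (b, a)

/-- Any two vertices can be joined by a walk using only edges from `S`. -/
def ConnectedVia (G : WMG V E) (S : Set E) : Prop :=
  ∀ a b : V, Relation.ReflTransGen (G.Step S) a b

/-- `G` is connected. -/
def Connected (G : WMG V E) : Prop := G.ConnectedVia Set.univ

/-- A set `T` of edges is a spanning tree: it has `#V - 1` edges and connects all vertices. -/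
def IsSpanningTree (G : WMG V E) (T : Finset E) : Prop :=
  T.card + 1 = Fintype.card V ∧ G.ConnectedVia ↑T

/-- `η_G(ℓ) = Σ_{T spanning tree} Π_{k ∉ T} ℓ_k`. -/
noncomputable def eta (G : WMG V E) (ℓ : E → ℝ) : ℝ :=
  ∑ T : Finset E, if G.IsSpanningTree T then ∏ k ∈ Tᶜ, ℓ k else 0

/-- The weighted Laplacian matrix of `G`. -/
noncomputable def lap (G : WMG V E) (ℓ : E → ℝ) : Matrix V V ℝ :=
  Matrix.of fun a b =>
    if a = b then
      ∑ k : E, if ((G.ends k).1 = a ∨ (G.ends k).2 = a) ∧ (G.ends k).1 ≠ (G.ends k).2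
        then (ℓ k)⁻¹ else 0
    else
      - ∑ k : E, if G.ends k = (a, b) ∨ G.ends k = (b, a) then (ℓ k)⁻¹ else 0

/-- The standard basis vector (point mass) at a vertex. -/
def delta (a : V) : V → ℝ := fun x => if x = a then 1 else 0

/-- Effective resistance `r(a,b)`: the entry at `a` of the unique solution `h` of
`Q^{(b)} h = u_a` (the Laplacian with row and column `b` deleted).  Equivalently, writing
`h̃` for the extension of `h` by `h̃ b = 0`, it is the entry at `a` of the unique `v` with
`Q v = δ_a - δ_b` and `v b = 0` (the two systems have the same solutions since all row and
column sums of `Q` vanish).  We set `r(a,a) = 0`; this is automatic in the connected case. -/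
noncomputable def res (G : WMG V E) (ℓ : E → ℝ) (a b : V) : ℝ :=
  if h : ∃! v : V → ℝ, G.lap ℓ *ᵥ v = delta a - delta b ∧ v b = 0
  then h.exists.choose a else 0

/-- The valence of a vertex (loop edges counted twice). -/
def valence (G : WMG V E) (a : V) : ℕ :=
  ∑ k : E, ((if (G.ends k).1 = a then 1 else 0) + (if (G.ends k).2 = a then 1 else 0))

/-- The genus of the polarized graph `(G, q)`: `g = #E - #V + 1 + Σ_a q(a)`. -/
def genus (G : WMG V E) (q : V → ℕ) : ℤ :=
  (Fintype.card E : ℤ) - (Fintype.card V : ℤ) + 1 + ∑ a, (q a : ℤ)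

/-- The canonical divisor `K(a) = 2 q(a) + v(a) - 2`, as a real number. -/
noncomputable def Kdiv (G : WMG V E) (q : V → ℕ) (a : V) : ℝ :=
  2 * (q a : ℝ) + (G.valence a : ℝ) - 2

/-- `F(e_k) = 1 - r(e_k)/ℓ_k` where `r(e_k)` is the resistance between the endpoints. -/
noncomputable def Fres (G : WMG V E) (ℓ : E → ℝ) (k : E) : ℝ :=
  1 - G.res ℓ (G.ends k).1 (G.ends k).2 / ℓ k

/-- Zhang's invariant `ε` of the polarized metric graph, via the paper's explicit formula. -/
noncomputable def epsilon (G : WMG V E) (q : V → ℕ) (ℓ : E → ℝ) : ℝ :=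
  (1 / (G.genus q : ℝ)) * ∑ a, ∑ b, (q a : ℝ) * G.Kdiv q b * G.res ℓ a b
  + (((G.genus q : ℝ) - 1) / (3 * (G.genus q : ℝ))) * ∑ k, (G.Fres ℓ k) ^ 2 * ℓ k
  + (1 / (2 * (G.genus q : ℝ))) * ∑ a, G.Kdiv q a *
      ∑ k, G.Fres ℓ k * (G.res ℓ a (G.ends k).1 + G.res ℓ a (G.ends k).2)

/-- `r(K, K) = Σ_{a,b} K(a) K(b) r(a,b)`. -/
noncomputable def rKK (G : WMG V E) (q : V → ℕ) (ℓ : E → ℝ) : ℝ :=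
  ∑ a, ∑ b, G.Kdiv q a * G.Kdiv q b * G.res ℓ a b

/-- Zhang's invariant `φ` of the polarized metric graph, via the paper's explicit formula
`φ = ((5g-2)/(4(g-1))) ε - (3/(8(g-1))) r(K,K) - ℓ(G)/4`. -/
noncomputable def phi (G : WMG V E) (q : V → ℕ) (ℓ : E → ℝ) : ℝ :=
  ((5 * (G.genus q : ℝ) - 2) / (4 * ((G.genus q : ℝ) - 1))) * G.epsilon q ℓ
  - (3 / (8 * ((G.genus q : ℝ) - 1))) * G.rKK q ℓ
  - (∑ k, ℓ k) / 4

/-- The map on vertices identifying `b` with `a` (realized on the subtype omitting `b`). -/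
def fuseV (a b : V) (hab : a ≠ b) (x : V) : {y : V // y ≠ b} :=
  if h : x = b then ⟨a, hab⟩ else ⟨x, h⟩

/-- The fusion `G'` of two distinct vertices `a, b` of `G`: identify `a` and `b`,
keeping all edges and lengths. -/
def fuse (G : WMG V E) (a b : V) (hab : a ≠ b) : WMG {y : V // y ≠ b} E :=
  ⟨fun k => (fuseV a b hab (G.ends k).1, fuseV a b hab (G.ends k).2)⟩

/-- The contraction `G/e` of a non-loop edge: identify the two endpoints of `e`,
delete `e`, and keep all other edges. -/
def contract (G : WMG V E) (k0 : E) (hk : (G.ends k0).1 ≠ (G.ends k0).2) :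
    WMG {y : V // y ≠ (G.ends k0).2} {k : E // k ≠ k0} :=
  ⟨fun k => (fuseV (G.ends k0).1 (G.ends k0).2 hk (G.ends k.1).1,
             fuseV (G.ends k0).1 (G.ends k0).2 hk (G.ends k.1).2)⟩

end WMG

/-- The `i`-th elementary symmetric polynomial of the family `ℓ`. -/
noncomputable def esymE {E : Type} [Fintype E] [DecidableEq E] (i : ℕ) (ℓ : E → ℝ) : ℝ :=
  ∑ s ∈ Finset.powersetCard i (Finset.univ : Finset E), ∏ k ∈ s, ℓ k

/-- The theta graph: two vertices joined by three parallel edges. -/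
def thetaGraph : WMG (Fin 2) (Fin 3) := ⟨fun _ => ((0 : Fin 2), (1 : Fin 2))⟩

/-! Both vertices of the theta graph have valence 3, so `K ≡ 1` and `g = 2`, and the resistance
between them is that of three resistors in parallel, `R = (Σ ℓ_k⁻¹)⁻¹ = σ₃/σ₂`. Then
`F(e_k) = 1 - R/ℓ_k` gives `Σ F(e_k) = 2` and `Σ F(e_k)² ℓ_k = ℓ(G) - 5R`, and the formula for
`φ` collapses to `φ(G) = ℓ(G)/12 - 5R/12`: the inequality holds with equality. -/

namespace WMG

variable {V E : Type} [Fintype V] [DecidableEq V] [Fintype E]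

theorem res_eq_apply_of_unique (G : WMG V E) (ℓ : E → ℝ) {a b : V} {v : V → ℝ}
    (hv : G.lap ℓ *ᵥ v = delta a - delta b) (hvb : v b = 0)
    (huniq : ∀ w : V → ℝ, G.lap ℓ *ᵥ w = delta a - delta b → w b = 0 → w = v) :
    G.res ℓ a b = v a := by
  have h : ∃! w : V → ℝ, G.lap ℓ *ᵥ w = delta a - delta b ∧ w b = 0 :=
    ⟨v, ⟨hv, hvb⟩, fun w hw => huniq w hw.1 hw.2⟩
  rw [res, dif_pos h, huniq _ h.exists.choose_spec.1 h.exists.choose_spec.2]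

section Dipole

variable {G : WMG (Fin 2) E} (hG : ∀ k, G.ends k = (0, 1))
include hG

theorem valence_of_ends_eq (a : Fin 2) : G.valence a = Fintype.card E := by
  fin_cases a <;> simp [valence, hG]

theorem mulVec_lap_apply_of_ends_eq (ℓ : E → ℝ) (w : Fin 2 → ℝ) {a b : Fin 2} (hab : a ≠ b) :
    (G.lap ℓ *ᵥ w) a = (∑ k, (ℓ k)⁻¹) * (w a - w b) := by
  fin_cases a <;> fin_cases b <;> first
    | contradiction
    | simp [lap, hG, mulVec, dotProduct, Fin.sum_univ_two]; ring

theorem res_of_ends_eq (ℓ : E → ℝ) (hs : ∑ k, (ℓ k)⁻¹ ≠ 0) (a b : Fin 2) :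
    G.res ℓ a b = if a = b then 0 else (∑ k, (ℓ k)⁻¹)⁻¹ := by
  have mem_pair : ∀ {x y : Fin 2}, x ≠ y → ∀ z, z = x ∨ z = y := by decide
  split_ifs with hab
  · subst hab
    refine res_eq_apply_of_unique G ℓ (v := 0) (by simp) rfl fun w hw hwa => funext fun x => ?_
    rcases eq_or_ne x a with rfl | hxa
    · exact hwa
    · have hx := congrFun hw x
      rw [mulVec_lap_apply_of_ends_eq hG ℓ w hxa, hwa, sub_self] at hx
      simpa [hs] using hx
  · refine (res_eq_apply_of_unique G ℓ (v := fun x => if x = a then (∑ k, (ℓ k)⁻¹)⁻¹ else 0) ?_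
      (if_neg (Ne.symm hab)) fun w hw hwb => funext fun x => ?_).trans (if_pos rfl)
    · funext x
      rcases mem_pair hab x with rfl | rfl
      · rw [mulVec_lap_apply_of_ends_eq hG ℓ _ hab]
        simp [delta, hab, Ne.symm hab, hs]
      · rw [mulVec_lap_apply_of_ends_eq hG ℓ _ (Ne.symm hab)]
        simp [delta, Ne.symm hab, hs]
    · have ha := congrFun hw a
      rw [mulVec_lap_apply_of_ends_eq hG ℓ w hab, hwb] at ha
      simp only [delta, Pi.sub_apply, if_true, if_neg hab, sub_zero] at ha
      rcases mem_pair hab x with rfl | rfl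
      · simp [eq_inv_of_mul_eq_one_right ha]
      · simp [hwb, Ne.symm hab]

theorem Fres_of_ends_eq (ℓ : E → ℝ) (hs : ∑ k, (ℓ k)⁻¹ ≠ 0) (k : E) :
    G.Fres ℓ k = 1 - (∑ j, (ℓ j)⁻¹)⁻¹ * (ℓ k)⁻¹ := by
  rw [Fres, hG, res_of_ends_eq hG ℓ hs, if_neg zero_ne_one, div_eq_mul_inv]

theorem sum_Fres_of_ends_eq (ℓ : E → ℝ) (hs : ∑ k, (ℓ k)⁻¹ ≠ 0) :
    ∑ k, G.Fres ℓ k = Fintype.card E - 1 := by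
  simp only [Fres_of_ends_eq hG ℓ hs, Finset.sum_sub_distrib, ← Finset.mul_sum,
    inv_mul_cancel₀ hs, Finset.sum_const, Finset.card_univ, nsmul_eq_mul, mul_one]

theorem sum_Fres_sq_mul_of_ends_eq (ℓ : E → ℝ) (hℓ : ∀ k, ℓ k ≠ 0) (hs : ∑ k, (ℓ k)⁻¹ ≠ 0) :
    ∑ k, G.Fres ℓ k ^ 2 * ℓ k = ∑ k, ℓ k - (2 * Fintype.card E - 1) * (∑ k, (ℓ k)⁻¹)⁻¹ := by
  have hterm : ∀ k, G.Fres ℓ k ^ 2 * ℓ k =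
      ℓ k - 2 * (∑ j, (ℓ j)⁻¹)⁻¹ + (∑ j, (ℓ j)⁻¹)⁻¹ ^ 2 * (ℓ k)⁻¹ := fun k => by
    rw [Fres_of_ends_eq hG ℓ hs]
    field_simp [hℓ k]
    ring
  simp only [hterm, Finset.sum_add_distrib, Finset.sum_sub_distrib, ← Finset.mul_sum,
    Finset.sum_const, Finset.card_univ, nsmul_eq_mul]
  field_simp
  ring

end Dipole

end WMG

open WMG in
theorem phi_thetaGraph (ℓ : Fin 3 → ℝ) (hℓ : ∀ k, 0 < ℓ k) :
    thetaGraph.phi (fun _ => 0) ℓ = (∑ k, ℓ k) / 12 - 5 / 12 * (∑ k, (ℓ k)⁻¹)⁻¹ := by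
  have hG : ∀ k, thetaGraph.ends k = (0, 1) := fun _ => rfl
  have hs : ∑ k, (ℓ k)⁻¹ ≠ 0 :=
    (Finset.sum_pos (fun k _ => inv_pos.2 (hℓ k)) Finset.univ_nonempty).ne'
  have hgenus : (thetaGraph.genus fun _ => 0 : ℝ) = 2 := by norm_num [genus]
  have hK : ∀ a, thetaGraph.Kdiv (fun _ => 0) a = 1 := fun a => by
    norm_num [Kdiv, valence_of_ends_eq hG]
  have hF := sum_Fres_of_ends_eq hG ℓ hs
  have hF2 := sum_Fres_sq_mul_of_ends_eq hG ℓ (fun k => (hℓ k).ne') hs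
  simp only [phi, epsilon, rKK, hgenus, hK, hG, res_of_ends_eq hG ℓ hs, hF2, Fin.sum_univ_two]
  simp only [Fin.isValue, ↓reduceIte, zero_add, add_zero, ← Finset.sum_mul, hF]
  norm_num
  ring

theorem esymE_three_div_esymE_two (ℓ : Fin 3 → ℝ) (hℓ : ∀ k, ℓ k ≠ 0) :
    esymE 3 ℓ / esymE 2 ℓ = (∑ k, (ℓ k)⁻¹)⁻¹ := by
  have h3 : esymE 3 ℓ = ℓ 0 * ℓ 1 * ℓ 2 := by
    rw [esymE, show Finset.powersetCard 3 (Finset.univ : Finset (Fin 3)) = {Finset.univ} by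
      decide, Finset.sum_singleton, Fin.prod_univ_three]
  have h2 : esymE 2 ℓ = ℓ 0 * ℓ 1 + ℓ 0 * ℓ 2 + ℓ 1 * ℓ 2 := by
    have hpairs : Finset.powersetCard 2 (Finset.univ : Finset (Fin 3)) =
        {{0, 1}, {0, 2}, {1, 2}} := by decide
    rw [esymE, hpairs, Finset.sum_insert (by decide), Finset.sum_insert (by decide),
      Finset.sum_singleton, Finset.prod_pair (by decide), Finset.prod_pair (by decide),
      Finset.prod_pair (by decide)]
    ring
  have hsum : ∑ k, (ℓ k)⁻¹ = esymE 2 ℓ / esymE 3 ℓ := by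
    rw [h2, h3, Fin.sum_univ_three]
    field_simp [hℓ 0, hℓ 1, hℓ 2]
    ring
  rw [hsum, inv_div]

/-- Let `G` be the graph with two vertices joined by three parallel edges of positive
lengths `ℓ_1, ℓ_2, ℓ_3`, polarized by `q ≡ 0` (the unique irreducible cubic polarized
graph of genus 2).  Then `(1/12)(ℓ_1 + ℓ_2 + ℓ_3) - φ(G) ≤ (5/12) σ_3/σ_2`. -/
theorem stmt_16 (ℓ : Fin 3 → ℝ) (hℓ : ∀ k, 0 < ℓ k) :
    (1 / 12 : ℝ) * (ℓ 0 + ℓ 1 + ℓ 2) - thetaGraph.phi (fun _ => 0) ℓ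
      ≤ (5 / 12 : ℝ) * esymE 3 ℓ / esymE 2 ℓ := by
  rw [phi_thetaGraph ℓ hℓ, mul_div_assoc, esymE_three_div_esymE_two ℓ fun k => (hℓ k).ne',
    Fin.sum_univ_three]
  exact le_of_eq (by ring)
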